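/- arXiv:1608.02197 — 3 statements merged into one kernel-verified Lean document; each statement's English description precedes it below -/
import Mathlib

section
/- Let k ≥ 1 and consider the hierarchical graph H_{2,…,2} (k copies of 2), whose vertices are binary strings of length k. If x = x_1…x_k is a vertex with x_k = 0, then the eccentricity of x equals alt(x) + k. -/
/-- The value of the `j`-th coordinate (0-indexed) of the string `x`,
extended by `0` for positions `≥ k`. -/
def extVal (n : ℕ → ℕ) (k : ℕ) (x : ∀ i : Fin k, Fin (n i)) (j : ℕ) : ℕ :=
  if h : j < k then (x ⟨j, h⟩).val else 0

/-- The alternating number of the string `x`: the number of (0-indexed) positions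
`j ∈ {0,…,k-1}` such that exactly one of `x_j`, `x_{j+1}` is zero (with `x_k := 0`). -/
def altNum (n : ℕ → ℕ) (k : ℕ) (x : ∀ i : Fin k, Fin (n i)) : ℕ :=
  ((Finset.range k).filter (fun j =>
    (extVal n k x j = 0 ∧ extVal n k x (j + 1) ≠ 0) ∨
    (extVal n k x j ≠ 0 ∧ extVal n k x (j + 1) = 0))).card

/-- Adjacency in the hierarchical graph `H_{n_1,…,n_k}` (coordinates 0-indexed):
rule (A1): the two strings differ exactly in the first coordinate;
rule (A2): for some `j`, one string has its first `j+1` coordinates all zero, the other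
has its first `j+1` coordinates all nonzero, and they agree on the remaining coordinates;
rule (A3): for some `m ≥ 1`, both strings have their first `m` coordinates zero, their
`m`-th coordinates are distinct and nonzero, and they agree beyond position `m`. -/
def HierAdj (n : ℕ → ℕ) (k : ℕ) (x y : ∀ i : Fin k, Fin (n i)) : Prop :=
  x ≠ y ∧
    ((∀ i : Fin k, 0 < i.val → x i = y i) ∨
     (∃ j : Fin k,
       (((∀ i : Fin k, i.val ≤ j.val → (x i).val = 0) ∧
         (∀ i : Fin k, i.val ≤ j.val → (y i).val ≠ 0)) ∨
        ((∀ i : Fin k, i.val ≤ j.val → (y i).val = 0) ∧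
         (∀ i : Fin k, i.val ≤ j.val → (x i).val ≠ 0))) ∧
       (∀ i : Fin k, j.val < i.val → x i = y i)) ∨
     (∃ m : Fin k, 0 < m.val ∧
       (∀ i : Fin k, i.val < m.val → (x i).val = 0 ∧ (y i).val = 0) ∧
       (x m).val ≠ 0 ∧ (y m).val ≠ 0 ∧ x m ≠ y m ∧
       (∀ i : Fin k, m.val < i.val → x i = y i)))

/-- The hierarchical graph `H_{n_1,…,n_k}` as a simple graph on the strings
`x = x_1…x_k` with `x_i ∈ Z_{n_i}`. -/
def hierGraph (n : ℕ → ℕ) (k : ℕ) : SimpleGraph (∀ i : Fin k, Fin (n i)) where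
  Adj := HierAdj n k
  symm := by
    refine ⟨?_⟩
    rintro x y ⟨hne, h⟩
    refine ⟨hne.symm, ?_⟩
    rcases h with h | ⟨j, hj, hag⟩ | ⟨m, hm, hpre, hx, hy, hxy, hs⟩
    · exact Or.inl fun i hi => (h i hi).symm
    · exact Or.inr (Or.inl ⟨j, hj.symm, fun i hi => (hag i hi).symm⟩)
    · exact Or.inr (Or.inr ⟨m, hm, fun i hi => ⟨(hpre i hi).2, (hpre i hi).1⟩,
        hy, hx, hxy.symm, fun i hi => (hs i hi).symm⟩)
  loopless := ⟨fun x h => h.1 rfl⟩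

/-!
Let `jumps x m` count the positions `i < m` with `x_i ≠ x_{i+1}`. Over `Z_2` every edge
complements a constant prefix `x_0 = ⋯ = x_j`, which changes `jumps · m` by at most one for
`m > j`. If `m` is the last position where `x` and `y` differ, then
`d(x, y) = 1 + jumps x m + jumps y m`: a walk must make `x` constant up to `m`, complement that
prefix, and then build the jumps of `y` below `m`. Formally, this quantity vanishes only at
`y`, changes by at most one along an edge, and drops along a suitable edge from every other
vertex (complement the first block of `x`, or the whole prefix up to `m` if `x` is constant
there). Hence `d(x, y) ≤ jumps x k + k = alt(x) + k`, with equality when the last bit of `x` is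
`0` and `y` is the alternating string ending in `1`.
-/

namespace SimpleGraph

variable {V : Type*} {G : SimpleGraph V} {f : V → ℕ} {y : V}

theorem le_length_of_potential (hy : f y = 0) (hlip : ∀ a b, G.Adj a b → f a ≤ f b + 1)
    {a : V} (p : G.Walk a y) : f a ≤ p.length := by
  induction p with
  | nil => simp [hy]
  | cons h _ ih =>
    rw [Walk.length_cons]
    exact (hlip _ _ h).trans (by omega)

theorem exists_walk_length_le_of_potential
    (hdesc : ∀ a, a ≠ y → ∃ b, G.Adj a b ∧ f b < f a) (a : V) :
    ∃ p : G.Walk a y, p.length ≤ f a := by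
  induction h : f a using Nat.strong_induction_on generalizing a with
  | _ n ih =>
    by_cases hay : a = y
    · subst hay
      exact ⟨.nil, by simp⟩
    obtain ⟨b, hab, hlt⟩ := hdesc a hay
    obtain ⟨p, hp⟩ := ih (f b) (h ▸ hlt) b rfl
    exact ⟨.cons hab p, by rw [Walk.length_cons]; omega⟩

theorem dist_eq_of_potential (hy : f y = 0) (hlip : ∀ a b, G.Adj a b → f a ≤ f b + 1)
    (hdesc : ∀ a, a ≠ y → ∃ b, G.Adj a b ∧ f b < f a) (a : V) : G.dist a y = f a := by
  obtain ⟨p, hp⟩ := exists_walk_length_le_of_potential hdesc a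
  obtain ⟨q, hq⟩ := p.reachable.exists_walk_length_eq_dist
  exact le_antisymm ((dist_le p).trans hp) (hq ▸ le_length_of_potential hy hlip q)

end SimpleGraph

namespace HierBinary

local notation "𝓗" => hierGraph (fun _ => 2)

variable {k : ℕ} {x y z : Fin k → Fin 2} {a b c i j m : ℕ}

def bit (x : Fin k → Fin 2) (j : ℕ) : ℕ := extVal (fun _ => 2) k x j

lemma bit_of_lt (h : j < k) : bit x j = (x ⟨j, h⟩).val := dif_pos h

lemma bit_of_le (h : k ≤ j) : bit x j = 0 := dif_neg (by omega)

lemma bit_val (i : Fin k) : bit x i = (x i).val := bit_of_lt i.isLt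

lemma bit_le_one (x : Fin k → Fin 2) (j : ℕ) : bit x j ≤ 1 := by
  unfold bit extVal
  split
  · exact Nat.le_of_lt_succ (Fin.isLt _)
  · exact zero_le_one

lemma ext_bit (h : ∀ j, bit x j = bit y j) : x = y :=
  funext fun i => Fin.ext (by simpa only [bit_val] using h i)

lemma bit_eq_of_forall_gt (h : ∀ i : Fin k, j < i.val → x i = y i) (hi : j < i) :
    bit x i = bit y i := by
  rcases lt_or_ge i k with hik | hik
  · rw [bit_of_lt hik, bit_of_lt hik, h ⟨i, hik⟩ hi]
  · rw [bit_of_le hik, bit_of_le hik]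

def jump (x : Fin k → Fin 2) (j : ℕ) : ℕ := if bit x j = bit x (j + 1) then 0 else 1

def jumps (x : Fin k → Fin 2) (m : ℕ) : ℕ := ∑ j ∈ Finset.range m, jump x j

lemma jump_le_one (x : Fin k → Fin 2) (j : ℕ) : jump x j ≤ 1 := by
  unfold jump; split <;> omega

lemma jump_eq_zero (h : bit x j = bit x (j + 1)) : jump x j = 0 := if_pos h

lemma jump_eq_one (h : bit x j ≠ bit x (j + 1)) : jump x j = 1 := if_neg h

lemma jumps_succ (x : Fin k → Fin 2) (m : ℕ) : jumps x (m + 1) = jumps x m + jump x m :=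
  Finset.sum_range_succ _ _

lemma jumps_mono (x : Fin k → Fin 2) (h : a ≤ b) : jumps x a ≤ jumps x b :=
  Finset.sum_le_sum_of_subset (Finset.range_subset_range.mpr h)

lemma jumps_le (x : Fin k → Fin 2) (m : ℕ) : jumps x m ≤ m :=
  (Finset.sum_le_sum fun j _ => jump_le_one x j).trans (by simp)

lemma altNum_eq_jumps (x : Fin k → Fin 2) : altNum (fun _ => 2) k x = jumps x k := by
  rw [altNum, Finset.card_filter]
  refine Finset.sum_congr rfl fun j _ => ?_
  have := bit_le_one x j
  have := bit_le_one x (j + 1)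
  unfold jump bit at *
  split_ifs <;> omega

lemma jumps_eq_zero_iff : jumps x m = 0 ↔ ∀ i ≤ m, bit x i = bit x 0 := by
  refine ⟨fun h i hi => ?_, fun h => Finset.sum_eq_zero fun i hi => jump_eq_zero ?_⟩
  · induction i with
    | zero => rfl
    | succ i ih =>
      have hjump := Finset.sum_eq_zero_iff.mp h i (Finset.mem_range.mpr hi)
      unfold jump at hjump
      split at hjump
      · rw [← ih (by omega), ‹bit x i = bit x (i + 1)›]
      · omega
  · rw [Finset.mem_range] at hi
    rw [h i (by omega), h (i + 1) (by omega)]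

lemma jumps_eq_zero_of_const (hx : ∀ i ≤ j, bit x i = c) (ha : a ≤ j) : jumps x a = 0 :=
  jumps_eq_zero_iff.mpr fun i hi => (hx i (by omega)).trans (hx 0 (by omega)).symm

lemma jumps_le_add_one_of_const (hy : ∀ i, a < i → i ≤ b → bit y i = c) :
    jumps y b ≤ jumps y a + 1 := by
  induction b with
  | zero => simp [jumps]
  | succ b ih =>
    rcases lt_trichotomy b a with hba | rfl | hab
    · exact (jumps_mono y (by omega)).trans (Nat.le_succ _)
    · rw [jumps_succ]
      exact Nat.add_le_add_left (jump_le_one y b) _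
    · have hb : bit y b = bit y (b + 1) :=
        (hy b hab (by omega)).trans (hy _ (by omega) le_rfl).symm
      rw [jumps_succ, jump_eq_zero hb]
      exact ih fun i h1 h2 => hy i h1 (by omega)

def topDiff (x y : Fin k → Fin 2) : ℕ := Nat.findGreatest (fun j => bit x j ≠ bit y j) k

lemma bit_eq_of_topDiff_lt (hi : topDiff x y < i) : bit x i = bit y i := by
  rcases le_or_gt i k with hik | hik
  · exact not_not.mp (Nat.findGreatest_is_greatest hi hik)
  · rw [bit_of_le hik.le, bit_of_le hik.le]

lemma le_topDiff (hi : bit x i ≠ bit y i) : i ≤ topDiff x y :=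
  not_lt.mp fun h => hi (bit_eq_of_topDiff_lt h)

lemma bit_topDiff_ne (h : x ≠ y) : bit x (topDiff x y) ≠ bit y (topDiff x y) := by
  obtain ⟨j, hj⟩ : ∃ j, bit x j ≠ bit y j := by
    by_contra! hall
    exact h (ext_bit hall)
  have hjk : j < k := by
    by_contra hjk
    exact hj (by rw [bit_of_le (not_lt.mp hjk), bit_of_le (not_lt.mp hjk)])
  exact Nat.findGreatest_spec (P := fun j => bit x j ≠ bit y j) hjk.le hj

lemma topDiff_lt (h : x ≠ y) : topDiff x y < k := by
  by_contra! hk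
  exact bit_topDiff_ne h (by rw [bit_of_le hk, bit_of_le hk])

lemma topDiff_eq (hj : bit x j ≠ bit y j) (hgt : ∀ i, j < i → bit x i = bit y i) :
    topDiff x y = j :=
  le_antisymm (not_lt.mp fun h => bit_topDiff_ne (fun hxy => hj (by rw [hxy])) (hgt _ h))
    (le_topDiff hj)

-- Over `Z_2` rule (A3) never applies, and (A1), (A2) both complement a constant prefix.
def IsPrefixFlip (x z : Fin k → Fin 2) (j : ℕ) : Prop :=
  ∃ c ≤ 1, (∀ i ≤ j, bit x i = c) ∧ (∀ i ≤ j, bit z i = 1 - c) ∧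
    ∀ i, j < i → bit x i = bit z i

namespace IsPrefixFlip

lemma symm (h : IsPrefixFlip x z j) : IsPrefixFlip z x j := by
  obtain ⟨c, hc, hx, hz, hgt⟩ := h
  exact ⟨1 - c, by omega, hz, fun i hi => by rw [hx i hi]; omega, fun i hi => (hgt i hi).symm⟩

lemma bit_ne (h : IsPrefixFlip x z j) (hi : i ≤ j) : bit x i ≠ bit z i := by
  obtain ⟨c, hc, hx, hz, -⟩ := h
  rw [hx i hi, hz i hi]
  omega

lemma bit_eq (h : IsPrefixFlip x z j) (hi : j < i) : bit x i = bit z i :=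
  h.choose_spec.2.2.2 i hi

lemma ne (h : IsPrefixFlip x z j) : x ≠ z := by
  rintro rfl
  exact h.bit_ne le_rfl rfl

lemma jumps_eq_zero (h : IsPrefixFlip x z j) (ha : a ≤ j) : jumps x a = 0 :=
  jumps_eq_zero_of_const h.choose_spec.2.1 ha

lemma jump_add_jump (h : IsPrefixFlip x z j) : jump x j + jump z j = 1 := by
  obtain ⟨c, hc, hx, hz, hgt⟩ := h
  have := bit_le_one z (j + 1)
  unfold jump
  rw [hx j le_rfl, hz j le_rfl, hgt (j + 1) (by omega)]
  split_ifs <;> omega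

lemma jumps_add_jump (h : IsPrefixFlip x z j) (hm : j < m) :
    jumps z m + jump x j = jumps x m + jump z j := by
  induction m, hm using Nat.le_induction with
  | base => rw [jumps_succ, jumps_succ, h.jumps_eq_zero le_rfl, h.symm.jumps_eq_zero le_rfl]; ring
  | succ m hjm ih =>
    have : jump z m = jump x m := by
      unfold jump
      rw [h.bit_eq (by omega), h.bit_eq (show j < m + 1 by omega)]
    rw [jumps_succ, jumps_succ, this]
    omega

lemma topDiff_eq (h : IsPrefixFlip x z j) (hxy : x ≠ y) (hj : j < topDiff x y) :
    topDiff z y = topDiff x y := by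
  refine HierBinary.topDiff_eq ?_ fun i hi => ?_
  · rw [← h.bit_eq hj]
    exact bit_topDiff_ne hxy
  · rw [← h.bit_eq (by omega)]
    exact bit_eq_of_topDiff_lt hi

end IsPrefixFlip

lemma forall_bit_eq_of_forall_val_eq (hj : j < k)
    (h : ∀ i : Fin k, i.val ≤ j → (x i).val = c) : ∀ i ≤ j, bit x i = c :=
  fun i hi => (bit_of_lt (by omega)).trans (h ⟨i, by omega⟩ hi)

lemma forall_bit_eq_one_of_forall_val_ne_zero (hj : j < k)
    (h : ∀ i : Fin k, i.val ≤ j → (x i).val ≠ 0) : ∀ i ≤ j, bit x i = 1 :=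
  forall_bit_eq_of_forall_val_eq hj fun i hi => by have := (x i).isLt; have := h i hi; omega

lemma isPrefixFlip_of_adj (h : (𝓗 k).Adj x z) : ∃ j < k, IsPrefixFlip x z j := by
  obtain ⟨hne, h | ⟨⟨j, hjk⟩, hflip, hgt⟩ | ⟨m, -, -, hxm, hzm, hxzm, -⟩⟩ := h
  · have hk : 0 < k := Nat.pos_of_ne_zero fun hk => hne (funext fun i => absurd i.isLt (by omega))
    have h0 : bit x 0 ≠ bit z 0 := by
      refine fun h0 => hne (ext_bit fun i => ?_)
      rcases Nat.eq_zero_or_pos i with rfl | hi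
      exacts [h0, bit_eq_of_forall_gt h hi]
    refine ⟨0, hk, bit x 0, bit_le_one x 0, fun i hi => by rw [Nat.le_zero.mp hi],
      fun i hi => ?_, fun i hi => bit_eq_of_forall_gt h hi⟩
    have := bit_le_one x 0
    have := bit_le_one z 0
    rw [Nat.le_zero.mp hi]
    omega
  · refine ⟨j, hjk, ?_⟩
    rcases hflip with ⟨hx, hz⟩ | ⟨hz, hx⟩
    · exact ⟨0, zero_le_one, forall_bit_eq_of_forall_val_eq hjk hx,
        forall_bit_eq_one_of_forall_val_ne_zero hjk hz, fun i hi => bit_eq_of_forall_gt hgt hi⟩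
    · exact ⟨1, le_rfl, forall_bit_eq_one_of_forall_val_ne_zero hjk hx,
        forall_bit_eq_of_forall_val_eq hjk hz, fun i hi => bit_eq_of_forall_gt hgt hi⟩
  · have := (x m).isLt
    have := (z m).isLt
    exact absurd (Fin.ext (by omega)) hxzm

lemma adj_of_isPrefixFlip (hjk : j < k) (h : IsPrefixFlip x z j) : (𝓗 k).Adj x z := by
  refine ⟨h.ne, Or.inr (Or.inl ⟨⟨j, hjk⟩, ?_, fun i hi => ?_⟩)⟩
  · obtain ⟨c, hc, hx, hz, -⟩ := h
    interval_cases c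
    · exact Or.inl ⟨fun i hi => by rw [← bit_val, hx i hi],
        fun i hi => by rw [← bit_val, hz i hi]; omega⟩
    · exact Or.inr ⟨fun i hi => by rw [← bit_val, hz i hi],
        fun i hi => by rw [← bit_val, hx i hi]; omega⟩
  · obtain ⟨-, -, -, -, hgt⟩ := h
    exact Fin.ext (by rw [← bit_val, ← bit_val]; exact hgt i hi)

def flipPrefix (x : Fin k → Fin 2) (m : ℕ) : Fin k → Fin 2 :=
  fun i => if i.val ≤ m then (x i).rev else x i

lemma isPrefixFlip_flipPrefix (hm : m < k) (hx : ∀ i ≤ m, bit x i = bit x 0) :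
    IsPrefixFlip x (flipPrefix x m) m := by
  refine ⟨bit x 0, bit_le_one x 0, hx, fun i hi => ?_, fun i hi => ?_⟩
  · rw [← hx i hi, bit_of_lt (by omega), bit_of_lt (by omega)]
    simp [flipPrefix, hi, Fin.val_rev]
  · rcases lt_or_ge i k with hik | hik
    · rw [bit_of_lt hik, bit_of_lt hik]
      simp [flipPrefix, show ¬ i ≤ m by omega]
    · rw [bit_of_le hik, bit_of_le hik]

def distFormula (x y : Fin k → Fin 2) : ℕ :=
  if x = y then 0 else 1 + jumps x (topDiff x y) + jumps y (topDiff x y)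

lemma distFormula_self (x : Fin k → Fin 2) : distFormula x x = 0 := if_pos rfl

lemma distFormula_of_ne (h : x ≠ y) :
    distFormula x y = 1 + jumps x (topDiff x y) + jumps y (topDiff x y) := if_neg h

namespace IsPrefixFlip

lemma distFormula_le (h : IsPrefixFlip x z j) (y : Fin k → Fin 2) :
    distFormula z y ≤ distFormula x y + 1 := by
  by_cases hzy : z = y
  · rw [hzy, distFormula_self]
    exact Nat.zero_le _
  by_cases hxy : x = y
  · subst hxy
    have hd : topDiff z x = j :=
      HierBinary.topDiff_eq (h.bit_ne le_rfl).symm fun i hi => (h.bit_eq hi).symm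
    rw [distFormula_of_ne hzy, hd, h.symm.jumps_eq_zero le_rfl, h.jumps_eq_zero le_rfl,
      distFormula_self]
  rw [distFormula_of_ne hzy, distFormula_of_ne hxy]
  rcases lt_or_ge j (topDiff x y) with hj | hj
  · rw [h.topDiff_eq hxy hj]
    have := h.jumps_add_jump hj
    have := h.jump_add_jump
    omega
  · have hzj : topDiff z y ≤ j := not_lt.mp fun hlt => bit_topDiff_ne hzy
      (by rw [← h.bit_eq hlt]; exact bit_eq_of_topDiff_lt (by omega))
    rw [h.jumps_eq_zero hj, h.symm.jumps_eq_zero hzj]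
    obtain ⟨c, -, hx, -, -⟩ := h
    -- `y` agrees with `x` above `topDiff x y`, so it is constant up to `j`
    have := jumps_le_add_one_of_const (a := topDiff x y) (b := topDiff z y) (c := c) (y := y)
      fun i h1 h2 => (bit_eq_of_topDiff_lt h1).symm.trans (hx i (by omega))
    omega

lemma distFormula_lt_of_topDiff (h : IsPrefixFlip x z (topDiff x y)) (hxy : x ≠ y) :
    distFormula z y < distFormula x y := by
  rw [distFormula_of_ne hxy]
  by_cases hzy : z = y
  · rw [hzy, distFormula_self]
    omega
  have hzgt : ∀ i, topDiff x y < i → bit z i = bit y i := fun i hi =>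
    (h.bit_eq hi).symm.trans (bit_eq_of_topDiff_lt hi)
  have hzym : bit z (topDiff x y) = bit y (topDiff x y) := by
    have := bit_le_one x (topDiff x y)
    have := bit_le_one y (topDiff x y)
    have := bit_le_one z (topDiff x y)
    have := h.bit_ne le_rfl
    have := bit_topDiff_ne hxy
    omega
  have hlt : topDiff z y < topDiff x y := by
    have := bit_topDiff_ne hzy
    refine lt_of_le_of_ne (not_lt.mp fun hlt => this (hzgt _ hlt)) fun heq => ?_
    exact this (by rw [heq]; exact hzym)
  -- `z` is constant below `topDiff x y` and `y` differs from it at `topDiff z y` but not just above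
  have hjump : jump y (topDiff z y) = 1 := by
    refine jump_eq_one fun heq => bit_topDiff_ne hzy ?_
    obtain ⟨c, -, -, hz, -⟩ := h
    rw [heq, ← bit_eq_of_topDiff_lt (Nat.lt_succ_self _), hz _ hlt.le, hz _ hlt]
  have := jumps_mono y (Nat.succ_le_of_lt hlt)
  rw [jumps_succ, hjump] at this
  rw [distFormula_of_ne hzy, h.jumps_eq_zero le_rfl, h.symm.jumps_eq_zero hlt.le]
  omega

lemma distFormula_lt_of_jump (h : IsPrefixFlip x z j) (hxy : x ≠ y) (hj : j < topDiff x y)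
    (hjump : jump x j = 1) : distFormula z y < distFormula x y := by
  have hzy : z ≠ y := by
    rintro rfl
    exact bit_topDiff_ne hxy (h.bit_eq hj)
  rw [distFormula_of_ne hzy, distFormula_of_ne hxy, h.topDiff_eq hxy hj]
  have := h.jumps_add_jump hj
  have := h.jump_add_jump
  omega

end IsPrefixFlip

lemma exists_adj_distFormula_lt (hxy : x ≠ y) :
    ∃ z, (𝓗 k).Adj x z ∧ distFormula z y < distFormula x y := by
  have hm := topDiff_lt hxy
  by_cases hconst : jumps x (topDiff x y) = 0
  · have h := isPrefixFlip_flipPrefix hm (jumps_eq_zero_iff.mp hconst)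
    exact ⟨_, adj_of_isPrefixFlip hm h, h.distFormula_lt_of_topDiff hxy⟩
  · -- complement the constant block of `x` that ends at its first jump
    have hex : ∃ p, p < topDiff x y ∧ jump x p ≠ 0 := by
      obtain ⟨p, hp, hne⟩ := Finset.exists_ne_zero_of_sum_ne_zero hconst
      exact ⟨p, Finset.mem_range.mp hp, hne⟩
    obtain ⟨hp, hjump⟩ := Nat.find_spec hex
    have hbefore : jumps x (Nat.find hex) = 0 := Finset.sum_eq_zero fun i hi =>
      not_not.mp (not_and.mp (Nat.find_min hex (Finset.mem_range.mp hi))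
        ((Finset.mem_range.mp hi).trans hp))
    have h := isPrefixFlip_flipPrefix (hp.trans hm) (jumps_eq_zero_iff.mp hbefore)
    exact ⟨_, adj_of_isPrefixFlip (hp.trans hm) h,
      h.distFormula_lt_of_jump hxy hp (by have := jump_le_one x (Nat.find hex); omega)⟩

theorem dist_eq_distFormula (x y : Fin k → Fin 2) : (𝓗 k).dist x y = distFormula x y :=
  SimpleGraph.dist_eq_of_potential (f := (distFormula · y)) (distFormula_self y)
    (fun _ _ hab => (isPrefixFlip_of_adj hab.symm).choose_spec.2.distFormula_le y)
    (fun _ ha => exists_adj_distFormula_lt ha) x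

lemma distFormula_le_jumps_add (x y : Fin k → Fin 2) : distFormula x y ≤ jumps x k + k := by
  by_cases hxy : x = y
  · rw [hxy, distFormula_self]
    exact Nat.zero_le _
  rw [distFormula_of_ne hxy]
  have := jumps_mono x (topDiff_lt hxy).le
  have := jumps_le y (topDiff x y)
  have := topDiff_lt hxy
  omega

def alternating (k : ℕ) : Fin k → Fin 2 := fun i => ⟨(k - i.val) % 2, Nat.mod_lt _ two_pos⟩

lemma bit_alternating (hi : i < k) : bit (alternating k) i = (k - i) % 2 := by
  rw [bit_of_lt hi]
  rfl

lemma jumps_alternating (hm : m ≤ k) : jumps (alternating k) m = m := by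
  induction m with
  | zero => rfl
  | succ m ih =>
    rw [jumps_succ, ih (by omega), jump_eq_one]
    rcases lt_or_ge (m + 1) k with h | h
    · rw [bit_alternating (by omega), bit_alternating h]
      omega
    · rw [bit_alternating (by omega), bit_of_le h]
      omega

lemma distFormula_alternating (hk : 1 ≤ k) (hx : bit x (k - 1) = 0) :
    distFormula x (alternating k) = jumps x k + k := by
  have hne : bit x (k - 1) ≠ bit (alternating k) (k - 1) := by
    rw [hx, bit_alternating (by omega)]
    omega
  have hd : topDiff x (alternating k) = k - 1 :=
    topDiff_eq hne fun i hi => by rw [bit_of_le (by omega), bit_of_le (by omega)]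
  have hlast : jump x (k - 1) = 0 :=
    jump_eq_zero (by rw [hx, Nat.sub_add_cancel hk, bit_of_le le_rfl])
  have := jumps_succ x (k - 1)
  rw [Nat.sub_add_cancel hk, hlast] at this
  rw [distFormula_of_ne (fun h => hne (by rw [h])), hd, jumps_alternating (by omega)]
  omega

end HierBinary

open HierBinary in
/-- In the binomial tree `H_{2,…,2}` (k copies of 2), if `x_k = 0` then the eccentricity
of `x` equals `alt(x) + k`. -/
theorem stmt_8 (k : ℕ) (hk : 1 ≤ k) (x : ∀ i : Fin k, Fin 2)
    (hxk : (x ⟨k - 1, by omega⟩).val = 0) :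
    (Finset.univ.sup fun y : ∀ i : Fin k, Fin 2 =>
        (hierGraph (fun _ => 2) k).dist x y) =
      altNum (fun _ => 2) k x + k := by
  simp only [dist_eq_distFormula, altNum_eq_jumps]
  refine le_antisymm (Finset.sup_le fun y _ => distFormula_le_jumps_add x y) ?_
  rw [← distFormula_alternating hk ((bit_of_lt _).trans hxk)]
  exact Finset.le_sup (f := (distFormula x ·)) (Finset.mem_univ _)
end

section
/- Let k ≥ 1 and n_1,…,n_k be integers with each n_i ≥ 2. The diameter of the hierarchical graph H_{n_1,…,n_k} (the maximum graph distance between two vertices) equals 2k − 1. -/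
/-!
Upper bound: by induction on `t`, within `t` steps every string `x` reaches both the string
obtained by zeroing its first `t` coordinates and one whose first `t` coordinates are all nonzero;
for `t + 1` one of the two is already reached after `t` steps and an (A2) edge on the first
`t + 1` coordinates leads to the other. Taking `t = k - 1` for both ends, the two strings reached
are joined by an (A1) or (A3) edge, or both lead to `0…0` if a last coordinate vanishes.

Lower bound: the alternating number changes by at most one along an edge, and an edge along which
the last coordinate becomes nonzero starts at `0…0`, whose alternating number is `0`. So a walk
from `a` with `a_k = 0` to `b` with `b_k ≠ 0` has length at least `altNum a + altNum b`, which is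
`(k - 1) + k` for the two strings alternating between `0` and `1`.
-/

namespace HierGraph

open Finset SimpleGraph

lemma card_filter_le_card_filter_add_one {α : Type*} [DecidableEq α] {s : Finset α}
    {p q : α → Prop} [DecidablePred p] [DecidablePred q] (a : α)
    (h : ∀ x ∈ s, x ≠ a → p x → q x) : #(s.filter p) ≤ #(s.filter q) + 1 :=
  calc #(s.filter p) ≤ #(insert a (s.filter q)) := card_le_card fun x hx => by
        rw [mem_filter] at hx
        by_cases hxa : x = a
        · exact hxa ▸ mem_insert_self _ _
        · exact mem_insert_of_mem (mem_filter.2 ⟨hx.1, h x hx.1 hxa hx.2⟩)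
    _ ≤ #(s.filter q) + 1 := card_insert_le _ _

lemma sup_sup_dist_eq_of_edist_le {V : Type*} [Fintype V] (G : SimpleGraph V) (d : ℕ)
    (hle : ∀ u v, G.edist u v ≤ d) (u₀ v₀ : V) (hge : d ≤ G.edist u₀ v₀) :
    (univ.sup fun u => univ.sup fun v => G.dist u v) = d := by
  refine le_antisymm (Finset.sup_le fun u _ => Finset.sup_le fun v _ => ?_) ?_
  · exact ENat.toNat_le_toNat (hle u v) (ENat.natCast_ne_top d)
  · have hd : G.dist u₀ v₀ = d := by
      rw [SimpleGraph.dist, le_antisymm (hle u₀ v₀) hge, ENat.toNat_natCast]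
    exact hd ▸ le_sup_of_le (mem_univ u₀) (le_sup (f := G.dist u₀) (mem_univ v₀))

variable {n : ℕ → ℕ} {k : ℕ}

lemma extVal_of_lt (x : ∀ i : Fin k, Fin (n i)) {j : ℕ} (h : j < k) :
    extVal n k x j = (x ⟨j, h⟩).val := dif_pos h

lemma extVal_of_le (x : ∀ i : Fin k, Fin (n i)) {j : ℕ} (h : k ≤ j) :
    extVal n k x j = 0 := dif_neg (by omega)

def zeroPrefix (t : ℕ) (x : ∀ i : Fin k, Fin (n i)) : ∀ i : Fin k, Fin (n i) :=
  fun i => if i.val < t then ⟨0, (x i).pos⟩ else x i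

def nonzeroPrefix (hn : ∀ i : Fin k, 2 ≤ n i) (t : ℕ) (x : ∀ i : Fin k, Fin (n i)) :
    ∀ i : Fin k, Fin (n i) :=
  fun i => if i.val < t ∧ (x i).val = 0 then ⟨1, hn i⟩ else x i

lemma zeroPrefix_succ {t : ℕ} (ht : t < k) (x : ∀ i : Fin k, Fin (n i))
    (hx : (x ⟨t, ht⟩).val = 0) : zeroPrefix (t + 1) x = zeroPrefix t x := by
  funext i
  by_cases hi : i.val = t
  · obtain rfl : i = ⟨t, ht⟩ := Fin.ext hi
    simp [zeroPrefix, Fin.ext_iff, hx]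
  · simp only [zeroPrefix, Nat.lt_succ_iff_lt_or_eq, hi, or_false]

lemma nonzeroPrefix_succ (hn : ∀ i : Fin k, 2 ≤ n i) {t : ℕ} (ht : t < k)
    (x : ∀ i : Fin k, Fin (n i)) (hx : (x ⟨t, ht⟩).val ≠ 0) :
    nonzeroPrefix hn (t + 1) x = nonzeroPrefix hn t x := by
  funext i
  by_cases hi : i.val = t
  · obtain rfl : i = ⟨t, ht⟩ := Fin.ext hi
    simp [nonzeroPrefix, hx]
  · simp only [nonzeroPrefix, Nat.lt_succ_iff_lt_or_eq, hi, or_false]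

lemma zeroPrefix_eq_of_le {t : ℕ} (ht : k ≤ t) (x y : ∀ i : Fin k, Fin (n i)) :
    zeroPrefix t x = zeroPrefix t y := by
  funext i
  simp [zeroPrefix, show i.val < t by omega]

lemma adj_zeroPrefix_nonzeroPrefix (hn : ∀ i : Fin k, 2 ≤ n i) {t : ℕ} (ht : t < k)
    (x : ∀ i : Fin k, Fin (n i)) :
    (hierGraph n k).Adj (zeroPrefix (t + 1) x) (nonzeroPrefix hn (t + 1) x) := by
  have hzero : ∀ i : Fin k, i.val ≤ t → (zeroPrefix (t + 1) x i).val = 0 := fun i hi => by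
    simp [zeroPrefix, show i.val < t + 1 by omega]
  have hnonzero : ∀ i : Fin k, i.val ≤ t → (nonzeroPrefix hn (t + 1) x i).val ≠ 0 :=
    fun i hi => by
      unfold nonzeroPrefix
      split_ifs with h
      · exact one_ne_zero
      · simpa [show i.val < t + 1 by omega] using h
  refine ⟨fun h => hnonzero ⟨t, ht⟩ le_rfl (h ▸ hzero ⟨t, ht⟩ le_rfl),
    Or.inr (Or.inl ⟨⟨t, ht⟩, Or.inl ⟨hzero, hnonzero⟩, fun i hi => ?_⟩)⟩
  simp [zeroPrefix, nonzeroPrefix, show ¬ i.val < t + 1 by simp at hi; omega]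

lemma edist_zeroPrefix_nonzeroPrefix_le (hn : ∀ i : Fin k, 2 ≤ n i)
    (x : ∀ i : Fin k, Fin (n i)) :
    ∀ t ≤ k, (hierGraph n k).edist x (zeroPrefix t x) ≤ t ∧
      (hierGraph n k).edist x (nonzeroPrefix hn t x) ≤ t := by
  intro t ht
  induction t with
  | zero =>
    simp only [CharP.cast_eq_zero, nonpos_iff_eq_zero, SimpleGraph.edist_eq_zero_iff]
    exact ⟨rfl, funext fun i => by simp [nonzeroPrefix]⟩
  | succ t ih =>
    obtain ⟨hz, hnz⟩ := ih (by omega)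
    have hedge := edist_eq_one_iff_adj.2 (adj_zeroPrefix_nonzeroPrefix hn (t := t) (by omega) x)
    by_cases hx : (x ⟨t, by omega⟩).val = 0
    · rw [zeroPrefix_succ (by omega) x hx] at hedge ⊢
      refine ⟨hz.trans (by norm_cast; omega), ?_⟩
      calc _ ≤ _ := (hierGraph n k).edist_triangle (v := zeroPrefix t x)
        _ ≤ (t + 1 : ℕ) := by rw [hedge]; push_cast; gcongr
    · rw [nonzeroPrefix_succ hn (by omega) x hx, SimpleGraph.edist_comm] at hedge
      rw [nonzeroPrefix_succ hn (by omega) x hx]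
      refine ⟨?_, hnz.trans (by norm_cast; omega)⟩
      calc _ ≤ _ := (hierGraph n k).edist_triangle (v := nonzeroPrefix hn t x)
        _ ≤ (t + 1 : ℕ) := by rw [hedge]; push_cast; gcongr

lemma edist_le_one_of_eq_above (x y : ∀ i : Fin k, Fin (n i)) (m : Fin k)
    (hx : ∀ i : Fin k, i.val < m.val → (x i).val = 0)
    (hy : ∀ i : Fin k, i.val < m.val → (y i).val = 0)
    (hxm : (x m).val ≠ 0) (hym : (y m).val ≠ 0)
    (hxy : ∀ i : Fin k, m.val < i.val → x i = y i) :
    (hierGraph n k).edist x y ≤ 1 := by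
  rw [edist_le_one_iff_adj_or_eq]
  by_cases heq : x = y
  · exact Or.inr heq
  refine Or.inl ⟨heq, ?_⟩
  rcases Nat.eq_zero_or_pos m.val with hm | hm
  · exact Or.inl fun i hi => hxy i (by omega)
  refine Or.inr (Or.inr ⟨m, hm, fun i hi => ⟨hx i hi, hy i hi⟩, hxm, hym,
    fun hxym => heq ?_, hxy⟩)
  funext i
  rcases lt_trichotomy i.val m.val with hi | hi | hi
  · exact Fin.ext ((hx i hi).trans (hy i hi).symm)
  · exact Fin.ext_iff.2 hi ▸ hxym
  · exact hxy i hi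

lemma edist_le_two_mul_sub_one_of_last_eq_zero (hn : ∀ i : Fin k, 2 ≤ n i) (hk : 1 ≤ k)
    (u v : ∀ i : Fin k, Fin (n i)) (hu : (u ⟨k - 1, by omega⟩).val = 0) :
    (hierGraph n k).edist u v ≤ (2 * k - 1 : ℕ) := by
  have hzero : zeroPrefix (k - 1) u = zeroPrefix k v := by
    rw [← zeroPrefix_succ (by omega) u hu, Nat.sub_add_cancel hk, zeroPrefix_eq_of_le le_rfl]
  calc _ ≤ _ := (hierGraph n k).edist_triangle (v := zeroPrefix (k - 1) u)
    _ ≤ (k - 1 : ℕ) + (k : ℕ) := by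
      refine add_le_add (edist_zeroPrefix_nonzeroPrefix_le hn u _ (by omega)).1 ?_
      rw [hzero, SimpleGraph.edist_comm]
      exact (edist_zeroPrefix_nonzeroPrefix_le hn v k le_rfl).1
    _ = (2 * k - 1 : ℕ) := by norm_cast; omega

lemma edist_le_two_mul_sub_one (hn : ∀ i : Fin k, 2 ≤ n i) (hk : 1 ≤ k)
    (u v : ∀ i : Fin k, Fin (n i)) :
    (hierGraph n k).edist u v ≤ (2 * k - 1 : ℕ) := by
  set m : Fin k := ⟨k - 1, by omega⟩
  by_cases hu : (u m).val = 0
  · exact edist_le_two_mul_sub_one_of_last_eq_zero hn hk u v hu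
  by_cases hv : (v m).val = 0
  · rw [SimpleGraph.edist_comm]
    exact edist_le_two_mul_sub_one_of_last_eq_zero hn hk v u hv
  have hmid : (hierGraph n k).edist (zeroPrefix m u) (zeroPrefix m v) ≤ 1 := by
    refine edist_le_one_of_eq_above _ _ m (fun i hi => by simp [zeroPrefix, hi])
      (fun i hi => by simp [zeroPrefix, hi]) (by simpa [zeroPrefix] using hu)
      (by simpa [zeroPrefix] using hv) fun i hi => absurd i.isLt (by simp [m] at hi; omega)
  have hu' := (edist_zeroPrefix_nonzeroPrefix_le hn u _ m.isLt.le).1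
  have hv' := (edist_zeroPrefix_nonzeroPrefix_le hn v _ m.isLt.le).1
  rw [SimpleGraph.edist_comm] at hv'
  calc _ ≤ _ := (hierGraph n k).edist_triangle (v := zeroPrefix m v)
    _ ≤ _ + _ := add_le_add_left ((hierGraph n k).edist_triangle (v := zeroPrefix m u)) _
    _ ≤ (k - 1 : ℕ) + 1 + (k - 1 : ℕ) := by gcongr
    _ = (2 * k - 1 : ℕ) := by norm_cast; omega

lemma extVal_eq_of_eq {x y : ∀ i : Fin k, Fin (n i)} {j : ℕ}
    (h : ∀ hj : j < k, x ⟨j, hj⟩ = y ⟨j, hj⟩) : extVal n k x j = extVal n k y j := by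
  unfold extVal
  split_ifs with hj
  · rw [h hj]
  · rfl

lemma altNum_le_altNum_add_one_of_forall_ne {x y : ∀ i : Fin k, Fin (n i)} (j₀ : ℕ)
    (h : ∀ j < k, j ≠ j₀ →
      ((extVal n k y j = 0 ↔ extVal n k x j = 0) ∧
        (extVal n k y (j + 1) = 0 ↔ extVal n k x (j + 1) = 0)) ∨
      (extVal n k y j = 0 ↔ extVal n k y (j + 1) = 0)) :
    altNum n k y ≤ altNum n k x + 1 :=
  card_filter_le_card_filter_add_one j₀ fun j hj hne => by
    rcases h j (mem_range.1 hj) hne with ⟨h₁, h₂⟩ | h' <;> grind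

lemma altNum_le_altNum_add_one_of_adj {x y : ∀ i : Fin k, Fin (n i)}
    (hxy : (hierGraph n k).Adj x y) : altNum n k y ≤ altNum n k x + 1 := by
  obtain ⟨-, h | ⟨j₀, hpre, hsuf⟩ | ⟨m, hm, hpre, hxm, hym, -, hsuf⟩⟩ := hxy
  · refine altNum_le_altNum_add_one_of_forall_ne 0 fun j _ hj => Or.inl ?_
    rw [extVal_eq_of_eq fun hj' => h ⟨j, hj'⟩ (by simp; omega),
      extVal_eq_of_eq fun hj' => h ⟨j + 1, hj'⟩ (by simp)]
    exact ⟨Iff.rfl, Iff.rfl⟩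
  · refine altNum_le_altNum_add_one_of_forall_ne j₀ fun j hjk hj => ?_
    rcases Nat.lt_or_gt_of_ne hj with hj | hj
    · have hj₁ : j + 1 < k := by omega
      right
      rw [extVal_of_lt y hjk, extVal_of_lt y hj₁]
      rcases hpre with ⟨-, hy⟩ | ⟨hy, -⟩
      · simp only [hy ⟨j, hjk⟩ (by simp; omega), hy ⟨j + 1, hj₁⟩ (by simp; omega)]
      · simp only [hy ⟨j, hjk⟩ (by simp; omega), hy ⟨j + 1, hj₁⟩ (by simp; omega)]
    · left
      rw [extVal_eq_of_eq fun hj' => hsuf ⟨j, hj'⟩ (by simp; omega),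
        extVal_eq_of_eq fun hj' => hsuf ⟨j + 1, hj'⟩ (by simp; omega)]
      exact ⟨Iff.rfl, Iff.rfl⟩
  · have hzero : ∀ j, extVal n k y j = 0 ↔ extVal n k x j = 0 := by
      intro j
      by_cases hjk : j < k
      · rw [extVal_of_lt x hjk, extVal_of_lt y hjk]
        rcases lt_trichotomy j m.val with hj | hj | hj
        · simp only [(hpre ⟨j, hjk⟩ hj).1, (hpre ⟨j, hjk⟩ hj).2]
        · obtain rfl : m = ⟨j, hjk⟩ := Fin.ext hj.symm
          simp only [hxm, hym]
        · rw [hsuf ⟨j, hjk⟩ hj]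
      · simp only [extVal_of_le _ (not_lt.1 hjk)]
    exact altNum_le_altNum_add_one_of_forall_ne 0 fun j _ _ => Or.inl ⟨hzero j, hzero (j + 1)⟩

lemma altNum_le_altNum_add_length {a b : ∀ i : Fin k, Fin (n i)}
    (p : (hierGraph n k).Walk a b) : altNum n k b ≤ altNum n k a + p.length := by
  induction p with
  | nil => simp
  | cons h _ ih =>
    have := altNum_le_altNum_add_one_of_adj h
    rw [Walk.length_cons]
    omega

lemma altNum_eq_zero {x : ∀ i : Fin k, Fin (n i)} (hx : ∀ j, extVal n k x j = 0) :
    altNum n k x = 0 :=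
  card_eq_zero.2 (filter_false_of_mem fun j _ => by simp [hx])

lemma extVal_eq_zero_of_adj_of_last {x y : ∀ i : Fin k, Fin (n i)}
    (hxy : (hierGraph n k).Adj x y) (hx : extVal n k x (k - 1) = 0)
    (hy : extVal n k y (k - 1) ≠ 0) (j : ℕ) : extVal n k x j = 0 := by
  have hk : k - 1 < k := by
    by_contra h
    exact hy (extVal_of_le y (by omega))
  rw [extVal_of_lt x hk] at hx
  rw [extVal_of_lt y hk] at hy
  by_cases hj : k ≤ j
  · exact extVal_of_le x hj
  rw [extVal_of_lt x (not_le.1 hj)]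
  obtain ⟨-, h | ⟨j₀, hpre, hsuf⟩ | ⟨m, hm, hpre, hxm, hym, -, hsuf⟩⟩ := hxy
  · have hk₁ : k - 1 = 0 := by
      by_contra h₀
      exact hy (h ⟨k - 1, hk⟩ (by simp; omega) ▸ hx)
    rwa [show (⟨j, _⟩ : Fin k) = ⟨k - 1, hk⟩ from Fin.ext (by simp; omega)]
  · have hj₀ : k - 1 ≤ j₀.val := by
      by_contra h₀
      exact hy (hsuf ⟨k - 1, hk⟩ (by simp; omega) ▸ hx)
    rcases hpre with ⟨hx₀, -⟩ | ⟨hy₀, -⟩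
    · exact hx₀ _ (by simp; omega)
    · exact absurd (hy₀ ⟨k - 1, hk⟩ hj₀) hy
  · rcases lt_trichotomy (k - 1) m.val with h | h | h
    · omega
    · obtain rfl : m = ⟨k - 1, hk⟩ := Fin.ext h.symm
      exact absurd hx hxm
    · exact absurd (hsuf ⟨k - 1, hk⟩ h ▸ hx) hy

lemma altNum_add_altNum_le_length {a b : ∀ i : Fin k, Fin (n i)}
    (p : (hierGraph n k).Walk a b) (ha : extVal n k a (k - 1) = 0)
    (hb : extVal n k b (k - 1) ≠ 0) : altNum n k a + altNum n k b ≤ p.length := by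
  induction p with
  | nil => exact absurd ha hb
  | @cons a c b h q ih =>
    rw [Walk.length_cons]
    by_cases hc : extVal n k c (k - 1) = 0
    · have := altNum_le_altNum_add_one_of_adj h.symm
      have := ih hc hb
      omega
    · have := altNum_eq_zero (extVal_eq_zero_of_adj_of_last h ha hc)
      have := altNum_le_altNum_add_one_of_adj h
      have := altNum_le_altNum_add_length q
      omega

lemma altNum_add_altNum_le_edist {a b : ∀ i : Fin k, Fin (n i)}
    (ha : extVal n k a (k - 1) = 0) (hb : extVal n k b (k - 1) ≠ 0) :
    ((altNum n k a + altNum n k b : ℕ) : ℕ∞) ≤ (hierGraph n k).edist a b := by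
  by_cases hr : (hierGraph n k).Reachable a b
  · obtain ⟨p, hp⟩ := hr.exists_walk_length_eq_edist
    rw [← hp]
    exact_mod_cast altNum_add_altNum_le_length p ha hb
  · rw [edist_eq_top_of_not_reachable hr]
    exact le_top

def alternating (hn : ∀ i : Fin k, 2 ≤ n i) (e : ℕ) : ∀ i : Fin k, Fin (n i) :=
  fun i => ⟨(i.val + e) % 2, (Nat.mod_lt _ two_pos).trans_le (hn i)⟩

lemma extVal_alternating (hn : ∀ i : Fin k, 2 ≤ n i) (e : ℕ) {j : ℕ} (hj : j < k) :
    extVal n k (alternating hn e) j = (j + e) % 2 :=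
  extVal_of_lt _ hj

lemma sub_one_le_altNum_alternating (hn : ∀ i : Fin k, 2 ≤ n i) (e : ℕ) :
    k - 1 ≤ altNum n k (alternating hn e) := by
  calc k - 1 = #(range (k - 1)) := (card_range _).symm
    _ ≤ _ := card_le_card fun j hj => by
      rw [mem_range] at hj
      rw [mem_filter, mem_range, extVal_alternating hn e (by omega),
        extVal_alternating hn e (by omega)]
      omega

lemma altNum_alternating_self (hn : ∀ i : Fin k, 2 ≤ n i) :
    altNum n k (alternating hn k) = k := by
  rw [altNum, filter_true_of_mem, card_range]
  intro j hj
  rw [mem_range] at hj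
  rw [extVal_alternating hn k hj]
  rcases lt_or_ge (j + 1) k with hj₁ | hj₁
  · rw [extVal_alternating hn k hj₁]
    omega
  · rw [extVal_of_le _ hj₁]
    omega

end HierGraph

open HierGraph in
/-- The diameter of `H_{n_1,…,n_k}` (maximum distance between two vertices)
equals `2k - 1`. -/
theorem stmt_14 (n : ℕ → ℕ) (k : ℕ) (hk : 1 ≤ k) (hn : ∀ i < k, 2 ≤ n i) :
    (Finset.univ.sup fun x : ∀ i : Fin k, Fin (n i) =>
        Finset.univ.sup fun y : ∀ i : Fin k, Fin (n i) => (hierGraph n k).dist x y) =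
      2 * k - 1 := by
  have hn' : ∀ i : Fin k, 2 ≤ n i := fun i => hn i i.isLt
  set a := alternating hn' (k + 1)
  set b := alternating hn' k
  refine sup_sup_dist_eq_of_edist_le _ _ (edist_le_two_mul_sub_one hn' hk) a b ?_
  have ha : extVal n k a (k - 1) = 0 := by rw [extVal_alternating hn' _ (by omega)]; omega
  have hb : extVal n k b (k - 1) ≠ 0 := by rw [extVal_alternating hn' _ (by omega)]; omega
  calc ((2 * k - 1 : ℕ) : ℕ∞) ≤ (altNum n k a + altNum n k b : ℕ) := by
        have : k - 1 ≤ altNum n k a := sub_one_le_altNum_alternating hn' (k + 1)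
        have : altNum n k b = k := altNum_alternating_self hn'
        exact_mod_cast (by omega)
    _ ≤ _ := altNum_add_altNum_le_edist ha hb
end

section
/- Let k ≥ 1 and consider the hierarchical graph H_{2,…,2} (k copies of 2), whose vertices are binary strings of length k. This graph is a tree (it is connected and acyclic); in particular it has 2^k vertices and 2^k − 1 edges. -/
/-!
Root the graph at `0`. Every other string `v` is adjacent, by rule (A2), to the string obtained
by flipping its leading constant block, and the flip lengthens that block (in `v` padded with a
zero), so following these parents leads to `0` and the graph is connected. Conversely every edge
joins some `v ≠ 0` to its parent, so there are at most `2^k - 1` edges, and a connected graph on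
`2^k` vertices with that few edges is a tree.
-/

namespace SimpleGraph

variable {V : Type*} [Finite V]

theorem isTree_of_parent (G : SimpleGraph V) (r : V) (p : V → V) (f : V → ℕ)
    (hadj : ∀ v, v ≠ r → G.Adj v (p v)) (hf : ∀ v, v ≠ r → f (p v) < f v)
    (hedge : ∀ ⦃x y⦄, G.Adj x y → ∃ v, v ≠ r ∧ s(v, p v) = s(x, y)) :
    G.IsTree := by
  have hreach : ∀ v, G.Reachable v r := by
    intro v
    induction h : f v using Nat.strong_induction_on generalizing v with
    | _ n ih =>
      by_cases hv : v = r
      · exact hv ▸ .rfl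
      · exact (hadj v hv).reachable.trans (ih _ (h ▸ hf v hv) _ rfl)
  have : Nonempty V := ⟨r⟩
  have hconn : G.Connected := ⟨fun u v => (hreach u).trans (hreach v).symm⟩
  have hle : Nat.card G.edgeSet ≤ Nat.card V - 1 := by
    have hsub : G.edgeSet ⊆ (fun v => s(v, p v)) '' {r}ᶜ := by
      rintro ⟨x, y⟩ hxy
      exact hedge hxy
    calc Nat.card G.edgeSet = G.edgeSet.ncard := Nat.card_coe_set_eq _
      _ ≤ ((fun v => s(v, p v)) '' {r}ᶜ).ncard := Set.ncard_le_ncard hsub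
      _ ≤ ({r}ᶜ : Set V).ncard := Set.ncard_image_le
      _ = Nat.card V - 1 := by rw [Set.ncard_compl, Set.ncard_singleton]
  have hge := hconn.card_vert_le_card_edgeSet_add_one
  have hpos : 0 < Nat.card V := Nat.card_pos
  exact isTree_iff_connected_and_card.2 ⟨hconn, by omega⟩

end SimpleGraph

namespace BinaryString

variable {k : ℕ}

def pad (v : Fin k → Fin 2) (i : ℕ) : Fin 2 := if h : i < k then v ⟨i, h⟩ else 0

lemma pad_of_lt (v : Fin k → Fin 2) {i : ℕ} (h : i < k) : pad v i = v ⟨i, h⟩ := dif_pos h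

lemma pad_of_le (v : Fin k → Fin 2) {i : ℕ} (h : k ≤ i) : pad v i = 0 := dif_neg (by omega)

lemma pad_zero (i : ℕ) : pad (0 : Fin k → Fin 2) i = 0 := by
  unfold pad; split <;> rfl

lemma exists_leadRun (v : Fin k → Fin 2) : ∃ m, k < m ∨ pad v m ≠ pad v 0 :=
  ⟨k + 1, .inl k.lt_succ_self⟩

/-- The length of the leading constant block of the zero-padded string `v`, capped at `k + 1`
(the value for `v = 0`). -/
def leadRun (v : Fin k → Fin 2) : ℕ := Nat.find (exists_leadRun v)

lemma pad_eq_of_lt_leadRun (v : Fin k → Fin 2) {i : ℕ} (h : i < leadRun v) :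
    pad v i = pad v 0 := by
  simpa using (not_or.1 (Nat.find_min (exists_leadRun v) h)).2

lemma leadRun_pos (v : Fin k → Fin 2) : 0 < leadRun v :=
  (Nat.find_pos _).2 (by simp)

lemma leadRun_le (v : Fin k → Fin 2) (hv : v ≠ 0) : leadRun v ≤ k := by
  by_contra! hk
  have h0 : pad v 0 = 0 := (pad_eq_of_lt_leadRun v hk).symm.trans (pad_of_le v le_rfl)
  refine hv (funext fun i => ?_)
  rw [← pad_of_lt v i.isLt, pad_eq_of_lt_leadRun v (by omega), h0]
  rfl

lemma pad_leadRun_ne (v : Fin k → Fin 2) (hv : v ≠ 0) : pad v (leadRun v) ≠ pad v 0 :=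
  (Nat.find_spec (exists_leadRun v)).resolve_left (leadRun_le v hv).not_gt

lemma leadRun_eq {v : Fin k → Fin 2} {m : ℕ} (hconst : ∀ i < m, pad v i = pad v 0)
    (hm : pad v m ≠ pad v 0) : leadRun v = m := by
  refine le_antisymm (Nat.find_min' _ (.inr hm)) (not_lt.1 fun hlt => ?_)
  have hk : k < leadRun v := (Nat.find_spec (exists_leadRun v)).resolve_right
    (not_not.2 (hconst _ hlt))
  have h0 : pad v 0 = 0 := (hconst k (by omega)).symm.trans (pad_of_le v le_rfl)
  exact hm (by rw [pad_of_le v (by omega), h0])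

def flipLeadRun (v : Fin k → Fin 2) : Fin k → Fin 2 :=
  fun i => if (i : ℕ) < leadRun v then v i + 1 else v i

lemma leadRun_lt_leadRun_flipLeadRun (v : Fin k → Fin 2) (hv : v ≠ 0) :
    leadRun v < leadRun (flipLeadRun v) := by
  have hle := leadRun_le v hv
  have hpad : ∀ i ≤ leadRun v,
      pad (flipLeadRun v) i = pad v i + if i < leadRun v then 1 else 0 := by
    intro i hi
    by_cases hik : i < k
    · simp only [pad_of_lt _ hik, flipLeadRun]
      split_ifs <;> simp
    · simp only [pad_of_le _ (not_lt.1 hik)]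
      rw [if_neg (by omega)]; rfl
  refine (Nat.lt_find_iff _ _).2 fun m hm => ?_
  rw [not_or, not_not, hpad m hm, hpad 0 (Nat.zero_le _), if_pos (leadRun_pos v)]
  refine ⟨by omega, ?_⟩
  rcases hm.lt_or_eq with hlt | rfl
  · rw [if_pos hlt, pad_eq_of_lt_leadRun v hlt]
  · rw [if_neg (lt_irrefl _)]
    have := pad_leadRun_ne v hv
    omega

lemma flipLeadRun_eq {x y : Fin k → Fin 2} {j : Fin k} {a : Fin 2}
    (hx : ∀ i : Fin k, i ≤ j → x i = a) (hnext : pad x (j + 1) ≠ a)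
    (hy : ∀ i : Fin k, y i = if i ≤ j then x i + 1 else x i) : flipLeadRun x = y := by
  have hx0 : pad x 0 = a := by
    rw [pad_of_lt x (Nat.zero_lt_of_lt j.isLt)]; exact hx _ (Nat.zero_le _)
  have hrun : leadRun x = j + 1 := by
    refine leadRun_eq (fun i hi => ?_) (by rwa [hx0])
    rw [hx0, pad_of_lt x (i := i) (by omega)]
    exact hx _ (Nat.le_of_lt_succ hi)
  funext i
  simp only [flipLeadRun, hrun, hy, Nat.lt_succ_iff, Fin.le_def]

def ZeroBlockFlip (j : Fin k) (x y : Fin k → Fin 2) : Prop :=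
  (∀ i : Fin k, i ≤ j → x i = 0 ∧ y i = 1) ∧ ∀ i : Fin k, j < i → x i = y i

lemma ZeroBlockFlip.exists_edge_eq_flipLeadRun {j : Fin k} {x y : Fin k → Fin 2}
    (h : ZeroBlockFlip j x y) :
    ∃ v, v ≠ 0 ∧ s(v, flipLeadRun v) = s(x, y) := by
  have hnext : pad x (j + 1) = pad y (j + 1) := by
    by_cases hj : j + 1 < k
    · rw [pad_of_lt x hj, pad_of_lt y hj]
      exact h.2 _ (Fin.lt_def.2 (Nat.lt_succ_self _))
    · rw [pad_of_le x (by omega), pad_of_le y (by omega)]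
  -- the bit after the block decides which endpoint is the child
  by_cases hx : pad x (j + 1) = 0
  · refine ⟨y, fun hy => ?_, ?_⟩
    · simpa [hy] using (h.1 j le_rfl).2
    · rw [flipLeadRun_eq (a := 1) (fun i hi => (h.1 i hi).2) (by omega) (x := y) (y := x)]
      · exact Sym2.eq_swap
      · intro i
        split_ifs with hi
        · have := h.1 i hi
          omega
        · exact h.2 i (not_le.1 hi)
  · refine ⟨x, fun hx0 => hx (hx0 ▸ pad_zero _), ?_⟩
    rw [flipLeadRun_eq (a := 0) (fun i hi => (h.1 i hi).1) hx (y := y)]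
    intro i
    split_ifs with hi
    · have := h.1 i hi
      omega
    · exact (h.2 i (not_le.1 hi)).symm

lemma exists_zeroBlockFlip_flipLeadRun (v : Fin k → Fin 2) (hv : v ≠ 0) :
    ∃ j, ZeroBlockFlip j v (flipLeadRun v) ∨ ZeroBlockFlip j (flipLeadRun v) v := by
  have hle := leadRun_le v hv
  have hpos := leadRun_pos v
  have hblock : ∀ i : Fin k, (i : ℕ) < leadRun v →
      v i = pad v 0 ∧ flipLeadRun v i = pad v 0 + 1 := by
    intro i hi
    have := pad_eq_of_lt_leadRun v hi
    rw [pad_of_lt v i.isLt] at this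
    simp only [flipLeadRun, if_pos hi, this, and_self]
  have hrest : ∀ i : Fin k, leadRun v ≤ i → v i = flipLeadRun v i := fun i hi => by
    simp only [flipLeadRun, if_neg (not_lt.2 hi)]
  refine ⟨⟨leadRun v - 1, by omega⟩, ?_⟩
  have hafter : ∀ i : Fin k, ⟨leadRun v - 1, by omega⟩ < i → v i = flipLeadRun v i :=
    fun i hi => hrest i (by simp only [Fin.lt_def] at hi; omega)
  by_cases h0 : pad v 0 = 0
  · refine .inl ⟨fun i hi => ?_, hafter⟩
    have := hblock i (by simp only [Fin.le_def] at hi; omega)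
    omega
  · refine .inr ⟨fun i hi => ?_, fun i hi => (hafter i hi).symm⟩
    have := hblock i (by simp only [Fin.le_def] at hi; omega)
    omega

end BinaryString

open BinaryString

lemma hierGraph_two_adj_iff {k : ℕ} (x y : Fin k → Fin 2) :
    (hierGraph (fun _ => 2) k).Adj x y ↔ ∃ j, ZeroBlockFlip j x y ∨ ZeroBlockFlip j y x := by
  constructor
  · rintro ⟨hne, hfirst | ⟨j, hblock, hagree⟩ | ⟨m, -, -, hx, hy, hxy, -⟩⟩
    · -- rule (A1) is the case `j = 0`
      have hk : 0 < k :=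
        Nat.pos_of_ne_zero fun hk => hne (funext fun i => absurd i.isLt (by omega))
      have h0 : x ⟨0, hk⟩ ≠ y ⟨0, hk⟩ := fun h0 => hne (funext fun i =>
        if hi : (i : ℕ) = 0 then (Fin.ext hi : i = ⟨0, hk⟩) ▸ h0 else hfirst i (by omega))
      have hle : ∀ i : Fin k, i ≤ ⟨0, hk⟩ → i = ⟨0, hk⟩ :=
        fun i hi => Fin.ext (Nat.le_zero.1 hi)
      refine ⟨⟨0, hk⟩, ?_⟩
      by_cases hx0 : x ⟨0, hk⟩ = 0
      · refine .inl ⟨fun i hi => ?_, hfirst⟩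
        rw [hle i hi]
        omega
      · refine .inr ⟨fun i hi => ?_, fun i hi => (hfirst i hi).symm⟩
        rw [hle i hi]
        omega
    · refine ⟨j, hblock.imp (fun h => ⟨fun i hi => ?_, hagree⟩)
        (fun h => ⟨fun i hi => ?_, fun i hi => (hagree i hi).symm⟩)⟩
      · have := h.1 i hi; have := h.2 i hi; omega
      · have := h.1 i hi; have := h.2 i hi; omega
    · -- rule (A3) needs two distinct nonzero elements of `Fin 2`
      beta_reduce at hx hy hxy
      omega
  · rintro ⟨j, h | h⟩
    · refine ⟨fun e => ?_, .inr (.inl ⟨j, .inl ⟨fun i hi => ?_, fun i hi => ?_⟩, h.2⟩)⟩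
      · have := h.1 j le_rfl; rw [e] at this; omega
      · have := h.1 i hi; omega
      · have := h.1 i hi; omega
    · refine ⟨fun e => ?_, .inr (.inl ⟨j, .inr ⟨fun i hi => ?_, fun i hi => ?_⟩,
        fun i hi => (h.2 i hi).symm⟩)⟩
      · have := h.1 j le_rfl; rw [e] at this; omega
      · have := h.1 i hi; omega
      · have := h.1 i hi; omega

theorem stmt_16_general (k : ℕ) :
    (hierGraph (fun _ => 2) k).IsTree ∧
    Fintype.card (∀ i : Fin k, Fin 2) = 2 ^ k ∧
    (hierGraph (fun _ => 2) k).edgeSet.ncard = 2 ^ k - 1 := by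
  have htree : (hierGraph (fun _ => 2) k).IsTree := by
    refine (hierGraph (fun _ => 2) k).isTree_of_parent 0 flipLeadRun (fun v => k + 1 - leadRun v)
      (fun v hv => (hierGraph_two_adj_iff _ _).2 (exists_zeroBlockFlip_flipLeadRun v hv))
      (fun v hv => by have := leadRun_le v hv; have := leadRun_lt_leadRun_flipLeadRun v hv; omega)
      fun x y hxy => ?_
    obtain ⟨j, h | h⟩ := (hierGraph_two_adj_iff x y).1 hxy
    · exact h.exists_edge_eq_flipLeadRun
    · exact Sym2.eq_swap (a := y) ▸ h.exists_edge_eq_flipLeadRun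
  have hcard : Fintype.card (∀ i : Fin k, Fin 2) = 2 ^ k := by simp
  refine ⟨htree, hcard, ?_⟩
  have hedges := (SimpleGraph.isTree_iff_connected_and_card.1 htree).2
  rw [Nat.card_eq_fintype_card (α := ∀ i : Fin k, Fin 2), hcard] at hedges
  rw [← Nat.card_coe_set_eq]
  omega

/-- The graph `H_{2,…,2}` (k copies of 2) is a tree; in particular it has `2^k` vertices
and `2^k - 1` edges. -/
theorem stmt_16 (k : ℕ) (hk : 1 ≤ k) :
    (hierGraph (fun _ => 2) k).IsTree ∧
    Fintype.card (∀ i : Fin k, Fin 2) = 2 ^ k ∧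
    (hierGraph (fun _ => 2) k).edgeSet.ncard = 2 ^ k - 1 :=
  stmt_16_general k
end
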